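/- arXiv:1801.02465 — 3 statements merged into one kernel-verified Lean document; each statement's English description precedes it below -/
import Mathlib

section
/- Let X be a centered Gaussian process on ℝ with stationary correlation r satisfying r(t) = 1 − a|t|^α(1+o(1)) as t → 0, with a > 0 and α ∈ (0,2]. Then for Z_u(t) = u(X(u^{−2/α} t) − u), conditionally on X(0) = u − w/u, the variance of the increment Var(Z_u(t) − Z_u(s)) converges to 2a|t−s|^α as u → ∞, for every fixed s, t. -/
open Filter Topology

/-! With `c_u = u^{-2/α}`, the hypothesis on `r` gives `u²(1 − r(c_u x)) → a|x|^α` for every `x`,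
because `|c_u x|^α = |x|^α / u²`. The conditional increment variance is
`2·u²(1 − r(c_u(t − s))) − u²(r(c_u t) − r(c_u s))²`; its first term tends to `2a|t − s|^α`, and the
correction is `(u²(r(c_u t) − r(c_u s)))² / u²`, whose numerator converges, so it tends to `0`. -/

lemma abs_rpow_neg_two_div_mul_rpow {α u : ℝ} (hα : α ≠ 0) (hu : 0 < u) (x : ℝ) :
    |u ^ (-(2 / α)) * x| ^ α = |x| ^ α / u ^ 2 := by
  rw [abs_mul, Real.mul_rpow (abs_nonneg _) (abs_nonneg _),
    abs_of_pos (Real.rpow_pos_of_pos hu _), ← Real.rpow_mul hu.le,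
    show -(2 / α) * α = -2 by field_simp, Real.rpow_neg hu.le, Real.rpow_two]
  ring

lemma tendsto_rpow_neg_mul_nhdsNE {p : ℝ} (hp : 0 < p) {x : ℝ} (hx : x ≠ 0) :
    Tendsto (fun u : ℝ => u ^ (-p) * x) atTop (𝓝[≠] 0) := by
  refine tendsto_nhdsWithin_of_tendsto_nhds_of_eventually_within _ ?_ ?_
  · simpa using (tendsto_rpow_neg_atTop hp).mul_const x
  · filter_upwards [eventually_gt_atTop 0] with u hu
    exact mul_ne_zero (Real.rpow_pos_of_pos hu _).ne' hx

lemma tendsto_sq_mul_one_sub_rescaled {r : ℝ → ℝ} {a α : ℝ} (ha : 0 < a) (hα : 0 < α)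
    (hr0 : r 0 = 1) (hr : Tendsto (fun t => (1 - r t) / (a * |t| ^ α)) (𝓝[≠] 0) (𝓝 1))
    (x : ℝ) :
    Tendsto (fun u : ℝ => u ^ 2 * (1 - r (u ^ (-(2 / α)) * x))) atTop (𝓝 (a * |x| ^ α)) := by
  rcases eq_or_ne x 0 with rfl | hx
  · simp [hr0, Real.zero_rpow hα.ne']
  have hlim := (hr.comp (tendsto_rpow_neg_mul_nhdsNE (p := 2 / α) (by positivity) hx)).mul_const
    (a * |x| ^ α)
  rw [one_mul] at hlim
  refine hlim.congr' ?_
  filter_upwards [eventually_gt_atTop 0] with u hu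
  have hxα : 0 < |x| ^ α := Real.rpow_pos_of_pos (abs_pos.mpr hx) _
  simp only [Function.comp_apply, abs_rpow_neg_two_div_mul_rpow hα.ne' hu]
  field_simp

lemma tendsto_sq_mul_sq_of_tendsto_sq_mul {f : ℝ → ℝ} {A : ℝ}
    (hf : Tendsto (fun u => u ^ 2 * f u) atTop (𝓝 A)) :
    Tendsto (fun u => u ^ 2 * f u ^ 2) atTop (𝓝 0) := by
  have hinv : Tendsto (fun u : ℝ => (u ^ 2)⁻¹) atTop (𝓝 0) :=
    (tendsto_pow_atTop two_ne_zero).inv_tendsto_atTop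
  refine ((hf.pow 2).mul hinv).congr' ?_ |>.trans (by rw [mul_zero])
  filter_upwards [eventually_gt_atTop 0] with u hu
  field_simp

theorem stmt_6_general
    (r : ℝ → ℝ) (a α : ℝ) (ha : 0 < a) (hα : 0 < α)
    (hr0 : r 0 = 1)
    (hr : Tendsto (fun t => (1 - r t) / (a * |t| ^ α))
      (nhdsWithin 0 {(0 : ℝ)}ᶜ) (nhds 1))
    (s t : ℝ) :
    Tendsto (fun u : ℝ =>
        u ^ 2 * (2 * (1 - r (u ^ (-(2 / α)) * (t - s))) -
          (r (u ^ (-(2 / α)) * t) - r (u ^ (-(2 / α)) * s)) ^ 2))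
      atTop (nhds (2 * a * |t - s| ^ α)) := by
  have hlim := tendsto_sq_mul_one_sub_rescaled ha hα hr0 hr
  have hcorr : Tendsto (fun u : ℝ => u ^ 2 * (r (u ^ (-(2 / α)) * t) - r (u ^ (-(2 / α)) * s)) ^ 2)
      atTop (𝓝 0) :=
    tendsto_sq_mul_sq_of_tendsto_sq_mul (((hlim s).sub (hlim t)).congr fun u => by ring)
  convert ((hlim (t - s)).const_mul 2).sub hcorr using 2 <;> ring

/-- For a stationary unit-variance Gaussian process with correlation
`r(t) = 1 − a|t|^α(1+o(1))` as `t → 0`, the conditional variance of the increment of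
`Z_u(t) = u(X(u^{−2/α}t) − u)` given `X(0)`, which equals
`u²(Var(X(u^{−2/α}t) − X(u^{−2/α}s)) − (r(u^{−2/α}t) − r(u^{−2/α}s))²)`
`= u²(2(1 − r(u^{−2/α}(t−s))) − (r(u^{−2/α}t) − r(u^{−2/α}s))²)`,
converges to `2a|t−s|^α` as `u → ∞`, for every fixed `s, t`. -/
theorem stmt_6
    (r : ℝ → ℝ) (a α : ℝ) (ha : 0 < a) (hα : 0 < α) (hα2 : α ≤ 2)
    (hr0 : r 0 = 1)
    (hr : Tendsto (fun t => (1 - r t) / (a * |t| ^ α))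
      (nhdsWithin 0 {(0 : ℝ)}ᶜ) (nhds 1))
    (s t : ℝ) :
    Tendsto (fun u : ℝ =>
        u ^ 2 * (2 * (1 - r (u ^ (-(2 / α)) * (t - s))) -
          (r (u ^ (-(2 / α)) * t) - r (u ^ (-(2 / α)) * s)) ^ 2))
      atTop (nhds (2 * a * |t - s| ^ α)) :=
  stmt_6_general r a α ha hα hr0 hr s t
end

section
/- Let σᵢ : [0,T] → (0,∞), i = 1,…,n, be continuous functions, each attaining its maximum on [0,T] at a unique common point t₀, with σᵢ(t) = σᵢ(t₀) − bᵢ|t − t₀|^{βᵢ}(1 + o(1)) as t → t₀ for bᵢ, βᵢ > 0. Let g(t) = Σᵢ σᵢ(t)^{−2}. Then g attains its minimum on [0,T] uniquely at t₀, and g(t) − g(t₀) = (Σ_{i: βᵢ = β} 2bᵢ/σᵢ³(t₀)) |t − t₀|^{β}(1 + o(1)) as t → t₀, where β = minᵢ βᵢ. -/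
/-!
Since `x ↦ x⁻²` has derivative `-2/x³`, a chain rule along the filter of approach to `t₀`
turns `σᵢ(t₀) - σᵢ(t) ∼ bᵢ|t - t₀|^{βᵢ}` into
`σᵢ(t)⁻² - σᵢ(t₀)⁻² ∼ (2bᵢ/σᵢ(t₀)³)|t - t₀|^{βᵢ}`. After dividing the sum by `|t - t₀|^β`,
the terms with `βᵢ > β` carry an extra factor `|t - t₀|^{βᵢ - β} → 0` and drop out.
-/

open Filter Topology

theorem HasDerivAt.tendsto_comp_sub_div {α : Type*} {l : Filter α} {φ : ℝ → ℝ} {φ' a L : ℝ}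
    (hφ : HasDerivAt φ φ' a) {u h : α → ℝ} (hu : Tendsto u l (𝓝[≠] a))
    (hq : Tendsto (fun x => (u x - a) / h x) l (𝓝 L)) :
    Tendsto (fun x => (φ (u x) - φ a) / h x) l (𝓝 (φ' * L)) := by
  have hslope : Tendsto (fun x => slope φ a (u x)) l (𝓝 φ') :=
    (hasDerivAt_iff_tendsto_slope.mp hφ).comp hu
  refine (hslope.mul hq).congr fun x => ?_
  have := sub_smul_slope φ a (u x)
  rw [smul_eq_mul, vsub_eq_sub] at this
  rw [← this]
  ring

theorem hasDerivAt_inv_sq {a : ℝ} (ha : a ≠ 0) :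
    HasDerivAt (fun x : ℝ => (x ^ 2)⁻¹) (-2 / a ^ 3) a := by
  refine ((hasDerivAt_pow 2 a).inv (c := fun x => x ^ 2) (pow_ne_zero 2 ha)).congr_deriv ?_
  field_simp
  ring

theorem tendsto_inv_sq_sub_div {α : Type*} {l : Filter α} {u h : α → ℝ} {a b : ℝ}
    (ha : a ≠ 0) (hb : b ≠ 0) (hu : Tendsto u l (𝓝[≠] a))
    (hq : Tendsto (fun x => (a - u x) / (b * h x)) l (𝓝 1)) :
    Tendsto (fun x => ((u x ^ 2)⁻¹ - (a ^ 2)⁻¹) / h x) l (𝓝 (2 * b / a ^ 3)) := by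
  have hq' : Tendsto (fun x => (u x - a) / h x) l (𝓝 (-b)) := by
    have := hq.const_mul (-b)
    rw [mul_one] at this
    refine this.congr fun x => ?_
    rw [div_mul_eq_div_div, mul_div_assoc']
    congr 1
    field_simp
    ring
  convert (hasDerivAt_inv_sq ha).tendsto_comp_sub_div hu hq' using 2
  ring

theorem tendsto_rpow_sub_of_le {α : Type*} {l : Filter α} {p : α → ℝ}
    (hp : Tendsto p l (𝓝[>] 0)) {e β : ℝ} (he : β ≤ e) :
    Tendsto (fun x => p x ^ (e - β)) l (𝓝 (if e = β then 1 else 0)) := by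
  split_ifs with h
  · simpa [h] using tendsto_const_nhds
  · have hpos : 0 < e - β := sub_pos.mpr (he.lt_of_ne' h)
    simpa [Real.zero_rpow hpos.ne'] using
      (tendsto_nhds_of_tendsto_nhdsWithin hp).rpow_const (Or.inr hpos.le)

theorem tendsto_sum_div_rpow_of_le {α ι : Type*} [Fintype ι] {l : Filter α} {p : α → ℝ}
    (hp : Tendsto p l (𝓝[>] 0)) {f : ι → α → ℝ} {c e : ι → ℝ} {β : ℝ} (he : ∀ i, β ≤ e i)
    (hf : ∀ i, Tendsto (fun x => f i x / p x ^ e i) l (𝓝 (c i))) :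
    Tendsto (fun x => (∑ i, f i x) / p x ^ β) l (𝓝 (∑ i, if e i = β then c i else 0)) := by
  have hterm : ∀ i, Tendsto (fun x => f i x / p x ^ e i * p x ^ (e i - β)) l
      (𝓝 (if e i = β then c i else 0)) := fun i => by
    simpa using (hf i).mul (tendsto_rpow_sub_of_le hp (he i))
  refine (tendsto_finsetSum _ fun i _ => hterm i).congr' ?_
  filter_upwards [hp self_mem_nhdsWithin] with x (hx : 0 < p x)
  rw [Finset.sum_div]
  refine Finset.sum_congr rfl fun i _ => ?_
  rw [Real.rpow_sub hx]
  field_simp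

theorem tendsto_abs_sub_nhdsGT {s : Set ℝ} (t₀ : ℝ) :
    Tendsto (fun t => |t - t₀|) (𝓝[s \ {t₀}] t₀) (𝓝[>] 0) := by
  refine tendsto_nhdsWithin_iff.mpr ⟨?_, ?_⟩
  · have := ((continuous_sub_right t₀).abs.tendsto t₀).mono_left
      (nhdsWithin_le_nhds (s := s \ {t₀}))
    simpa using this
  · filter_upwards [self_mem_nhdsWithin] with t ht
    exact abs_pos.mpr (sub_ne_zero.mpr ht.2)

theorem stmt_8_general
    (n : ℕ) (T : ℝ) (σ : Fin n → ℝ → ℝ) (t₀ : ℝ)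
    (ht₀ : t₀ ∈ Set.Icc 0 T)
    (hσcont : ∀ i, ContinuousOn (σ i) (Set.Icc 0 T))
    (hσpos : ∀ i t, t ∈ Set.Icc 0 T → 0 < σ i t)
    (hmax : ∀ i, ∀ t ∈ Set.Icc 0 T, t ≠ t₀ → σ i t < σ i t₀)
    (b βv : Fin n → ℝ) (hb : ∀ i, 0 < b i)
    (hexp : ∀ i, Tendsto (fun t => (σ i t₀ - σ i t) / (b i * |t - t₀| ^ βv i))
      (nhdsWithin t₀ (Set.Icc 0 T \ {t₀})) (nhds 1))
    (β : ℝ) (hβle : ∀ i, β ≤ βv i) (hβex : ∃ i, βv i = β)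
    (g : ℝ → ℝ) (hg : ∀ t, g t = ∑ i, ((σ i t) ^ 2)⁻¹) :
    (∀ t ∈ Set.Icc 0 T, t ≠ t₀ → g t₀ < g t) ∧
    Tendsto (fun t => (g t - g t₀) /
        ((∑ i, if βv i = β then 2 * b i / (σ i t₀) ^ 3 else 0) * |t - t₀| ^ β))
      (nhdsWithin t₀ (Set.Icc 0 T \ {t₀})) (nhds 1) := by
  obtain rfl : g = fun t => ∑ i, ((σ i t) ^ 2)⁻¹ := funext hg
  obtain ⟨i₀, hi₀⟩ := hβex
  have hσ₀ : ∀ i, 0 < σ i t₀ := fun i => hσpos i t₀ ht₀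
  refine ⟨fun t ht hne => ?_, ?_⟩
  · refine Finset.sum_lt_sum_of_nonempty ⟨i₀, Finset.mem_univ _⟩ fun i _ => ?_
    exact inv_strictAnti₀ (pow_pos (hσpos i t ht) 2)
      (pow_lt_pow_left₀ (hmax i t ht hne) (hσpos i t ht).le two_ne_zero)
  · set C := ∑ i, if βv i = β then 2 * b i / (σ i t₀) ^ 3 else 0
    have hcoef : ∀ i, 0 < 2 * b i / σ i t₀ ^ 3 := fun i =>
      div_pos (mul_pos two_pos (hb i)) (pow_pos (hσ₀ i) 3)
    have hC : 0 < C := by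
      refine Finset.sum_pos' (fun i _ => ?_)
        ⟨i₀, Finset.mem_univ _, by simpa [hi₀] using hcoef i₀⟩
      split_ifs
      exacts [(hcoef i).le, le_rfl]
    have hσ : ∀ i, Tendsto (σ i) (𝓝[Set.Icc 0 T \ {t₀}] t₀) (𝓝[≠] σ i t₀) := fun i =>
      tendsto_nhdsWithin_iff.mpr
        ⟨((hσcont i t₀ ht₀).mono Set.sdiff_subset).tendsto,
          eventually_nhdsWithin_of_forall fun t ht => (hmax i t ht.1 ht.2).ne⟩
    have hlim : Tendsto (fun t => (∑ i, ((σ i t ^ 2)⁻¹ - (σ i t₀ ^ 2)⁻¹)) / |t - t₀| ^ β)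
        (𝓝[Set.Icc 0 T \ {t₀}] t₀) (𝓝 C) :=
      tendsto_sum_div_rpow_of_le (tendsto_abs_sub_nhdsGT t₀) hβle fun i =>
        tendsto_inv_sq_sub_div (hσ₀ i).ne' (hb i).ne' (hσ i) (hexp i)
    simpa [Finset.sum_sub_distrib, div_div, mul_comm, hC.ne'] using hlim.div_const C

/-- If each `σᵢ` attains its maximum on `[0,T]` uniquely at the common point `t₀` with
`σᵢ(t) = σᵢ(t₀) − bᵢ|t−t₀|^{βᵢ}(1+o(1))`, then `g(t) = Σᵢ σᵢ(t)⁻²` attains its minimum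
uniquely at `t₀` and `g(t) − g(t₀) = (Σ_{i : βᵢ = β} 2bᵢ/σᵢ(t₀)³)|t−t₀|^β (1+o(1))`,
where `β = minᵢ βᵢ`. -/
theorem stmt_8
    (n : ℕ) (T : ℝ) (hT : 0 < T) (σ : Fin n → ℝ → ℝ) (t₀ : ℝ)
    (ht₀ : t₀ ∈ Set.Icc 0 T)
    (hσcont : ∀ i, ContinuousOn (σ i) (Set.Icc 0 T))
    (hσpos : ∀ i t, t ∈ Set.Icc 0 T → 0 < σ i t)
    (hmax : ∀ i, ∀ t ∈ Set.Icc 0 T, t ≠ t₀ → σ i t < σ i t₀)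
    (b βv : Fin n → ℝ) (hb : ∀ i, 0 < b i) (hβv : ∀ i, 0 < βv i)
    (hexp : ∀ i, Tendsto (fun t => (σ i t₀ - σ i t) / (b i * |t - t₀| ^ βv i))
      (nhdsWithin t₀ (Set.Icc 0 T \ {t₀})) (nhds 1))
    (β : ℝ) (hβle : ∀ i, β ≤ βv i) (hβex : ∃ i, βv i = β)
    (g : ℝ → ℝ) (hg : ∀ t, g t = ∑ i, ((σ i t) ^ 2)⁻¹) :
    (∀ t ∈ Set.Icc 0 T, t ≠ t₀ → g t₀ < g t) ∧
    Tendsto (fun t => (g t - g t₀) /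
        ((∑ i, if βv i = β then 2 * b i / (σ i t₀) ^ 3 else 0) * |t - t₀| ^ β))
      (nhdsWithin t₀ (Set.Icc 0 T \ {t₀})) (nhds 1) :=
  stmt_8_general n T σ t₀ ht₀ hσcont hσpos hmax b βv hb hexp β hβle hβex g hg
end

section
/- Let g_u(t) = Σ_{i=1}^n (1 − hᵢ(t)/u)², where hᵢ : [0,T] → ℝ are continuous, each attaining its maximum on [0,T] at the unique common point t₀, with hᵢ(t) = hᵢ(t₀) − cᵢ|t − t₀|^{γᵢ}(1+o(1)) as t → t₀, cᵢ ≥ 0, maxᵢ cᵢ > 0, γᵢ > 0. Then there exist θ > 0 and constants C₁, C₂ > 0 such that for all u large: g_u(t) − g_u(t₀) ≥ C₁ |t − t₀|^γ / u for t ∈ [t₀−θ, t₀+θ], and g_u(t) − g_u(t₀) ≥ C₂/u for t ∈ [0,T] ∖ [t₀−θ, t₀+θ], where γ = min{γᵢ : cᵢ > 0}. -/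
open Filter

/-- Variance-separation estimate: for `g_u(t) = Σᵢ(1 − hᵢ(t)/u)²` with `hᵢ` continuous,
all attaining their maximum on `[0,T]` uniquely at the common point `t₀` with local
expansions `hᵢ(t) = hᵢ(t₀) − cᵢ|t−t₀|^{γᵢ}(1+o(1))`, `cᵢ ≥ 0`, `maxᵢ cᵢ > 0`, there are
`θ, C₁, C₂ > 0` such that for large `u`: `g_u(t) − g_u(t₀) ≥ C₁|t−t₀|^γ/u` near `t₀` and
`g_u(t) − g_u(t₀) ≥ C₂/u` away from `t₀`, where `γ = min{γᵢ : cᵢ > 0}`. -/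
theorem stmt_18
    (n : ℕ) (T : ℝ) (hT : 0 < T) (h : Fin n → ℝ → ℝ) (t₀ : ℝ)
    (ht₀ : t₀ ∈ Set.Icc 0 T)
    (hcont : ∀ i, ContinuousOn (h i) (Set.Icc 0 T))
    (hmax : ∀ i, ∀ t ∈ Set.Icc 0 T, t ≠ t₀ → h i t < h i t₀)
    (c γv : Fin n → ℝ) (hc : ∀ i, 0 ≤ c i) (hcpos : ∃ i, 0 < c i)
    (hγv : ∀ i, 0 < γv i)
    (hexp : ∀ i, Tendsto (fun t => (h i t₀ - h i t) / |t - t₀| ^ γv i)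
      (nhdsWithin t₀ (Set.Icc 0 T \ {t₀})) (nhds (c i)))
    (γ : ℝ) (hγle : ∀ i, 0 < c i → γ ≤ γv i) (hγex : ∃ i, 0 < c i ∧ γv i = γ)
    (g : ℝ → ℝ → ℝ) (hg : ∀ u t, g u t = ∑ i, (1 - h i t / u) ^ 2) :
    ∃ θ > 0, ∃ C₁ > 0, ∃ C₂ > 0, ∀ᶠ u in atTop,
      (∀ t ∈ Set.Icc (t₀ - θ) (t₀ + θ) ∩ Set.Icc 0 T,
        C₁ * |t - t₀| ^ γ / u ≤ g u t - g u t₀) ∧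
      (∀ t ∈ Set.Icc 0 T \ Set.Icc (t₀ - θ) (t₀ + θ),
        C₂ / u ≤ g u t - g u t₀) := by
  obtain ⟨i₀, hci₀, hγi₀⟩ := hγex
  have hγpos : 0 < γ := hγi₀ ▸ hγv i₀
  have hle : ∀ i, ∀ t ∈ Set.Icc (0:ℝ) T, h i t ≤ h i t₀ := by
    intro i t ht
    rcases eq_or_ne t t₀ with rfl | hne
    · exact le_refl _
    · exact (hmax i t ht hne).le
  -- uniform bound M on all |h i| over [0,T]
  have hbd : ∀ i : Fin n, ∃ B : ℝ, ∀ t ∈ Set.Icc (0:ℝ) T, |h i t| ≤ B := by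
    intro i
    obtain ⟨B, hB⟩ := isCompact_Icc.exists_bound_of_continuousOn (hcont i)
    exact ⟨B, fun t ht => by simpa using hB t ht⟩
  choose B hB using hbd
  set M : ℝ := ∑ i, |B i| with hM
  have hMnn : 0 ≤ M := Finset.sum_nonneg fun i _ => abs_nonneg _
  have hMi : ∀ i, ∀ t ∈ Set.Icc (0:ℝ) T, |h i t| ≤ M := by
    intro i t ht
    calc |h i t| ≤ B i := hB i t ht
      _ ≤ |B i| := le_abs_self _
      _ ≤ M := Finset.single_le_sum (fun j _ => abs_nonneg (B j)) (Finset.mem_univ i)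
  -- core inequality: for u large, (Σ Dᵢ(t))/u ≤ g u t − g u t₀
  have key : ∀ u : ℝ, 2 * M + 1 ≤ u → ∀ t ∈ Set.Icc (0:ℝ) T,
      (∑ i, (h i t₀ - h i t)) / u ≤ g u t - g u t₀ := by
    intro u hu t ht
    have hu0 : 0 < u := lt_of_lt_of_le (by linarith) hu
    rw [hg, hg, ← Finset.sum_sub_distrib, Finset.sum_div]
    apply Finset.sum_le_sum
    intro i _
    have ha : h i t ≤ M := (le_abs_self _).trans (hMi i t ht)
    have hb : h i t₀ ≤ M := (le_abs_self _).trans (hMi i t₀ ht₀)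
    have hD : 0 ≤ h i t₀ - h i t := by linarith [hle i t ht]
    have hfac : 0 ≤ 1 - (h i t + h i t₀) / u := by
      rw [sub_nonneg, div_le_one hu0]; linarith
    have hid : (1 - h i t / u) ^ 2 - (1 - h i t₀ / u) ^ 2
        = (h i t₀ - h i t) / u + (h i t₀ - h i t) / u * (1 - (h i t + h i t₀) / u) := by
      field_simp; ring
    rw [hid]
    have := mul_nonneg (div_nonneg hD hu0.le) hfac
    linarith
  -- near t₀ : get θ from the limit at i₀
  have hlim := hexp i₀
  rw [hγi₀] at hlim
  have hev : ∀ᶠ t in nhdsWithin t₀ (Set.Icc 0 T \ {t₀}),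
      c i₀ / 2 < (h i₀ t₀ - h i₀ t) / |t - t₀| ^ γ :=
    hlim.eventually (eventually_gt_nhds (by linarith))
  rw [eventually_nhdsWithin_iff, Metric.eventually_nhds_iff] at hev
  obtain ⟨ε, hε, hev⟩ := hev
  -- far from t₀ : compactness minimum
  set F : ℝ → ℝ := fun t => ∑ i, (h i t₀ - h i t) with hF
  set K : Set ℝ := Set.Icc (0:ℝ) T \ Set.Ioo (t₀ - ε/2) (t₀ + ε/2) with hK
  have hKc : IsCompact K := isCompact_Icc.diff isOpen_Ioo
  have hFc : ContinuousOn F K := by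
    apply continuousOn_finset_sum
    intro i _
    exact continuousOn_const.sub ((hcont i).mono Set.diff_subset)
  have hFpos : ∀ x ∈ K, 0 < F x := by
    rintro x ⟨hx1, hx2⟩
    have hne : x ≠ t₀ := by
      rintro rfl
      exact hx2 ⟨by linarith, by linarith⟩
    exact Finset.sum_pos (fun i _ => sub_pos.mpr (hmax i x hx1 hne)) ⟨i₀, Finset.mem_univ i₀⟩
  obtain ⟨C₂, hC₂pos, hC₂⟩ : ∃ C₂ > 0, ∀ x ∈ K, C₂ ≤ F x := by
    rcases K.eq_empty_or_nonempty with hKe | hKne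
    · exact ⟨1, one_pos, fun x hx => absurd (hKe ▸ hx) (Set.notMem_empty x)⟩
    · obtain ⟨x₀, hx₀K, hx₀⟩ := hKc.exists_isMinOn hKne hFc
      exact ⟨F x₀, hFpos x₀ hx₀K, fun x hx => hx₀ hx⟩
  refine ⟨ε/2, by linarith, c i₀ / 2, by linarith, C₂, hC₂pos, ?_⟩
  filter_upwards [eventually_ge_atTop (2 * M + 1)] with u hu
  have hu0 : 0 < u := lt_of_lt_of_le (by linarith) hu
  constructor
  · rintro t ⟨htθ, htT⟩
    have hkey := key u hu t htT
    rcases eq_or_ne t t₀ with rfl | hne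
    · simp [sub_self, abs_zero, Real.zero_rpow hγpos.ne']
    · have htS : t ∈ Set.Icc 0 T \ {t₀} := ⟨htT, hne⟩
      have habs : |t - t₀| ≤ ε / 2 :=
        abs_sub_le_iff.mpr ⟨by linarith [htθ.2], by linarith [htθ.1]⟩
      have hdist : dist t t₀ < ε := by rw [Real.dist_eq]; linarith
      have hlt := hev hdist htS
      have hpow : 0 < |t - t₀| ^ γ :=
        Real.rpow_pos_of_pos (abs_pos.mpr (sub_ne_zero.mpr hne)) γ
      have h1 : c i₀ / 2 * |t - t₀| ^ γ ≤ h i₀ t₀ - h i₀ t :=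
        (le_div_iff₀ hpow).mp hlt.le
      have h2 : h i₀ t₀ - h i₀ t ≤ ∑ i, (h i t₀ - h i t) :=
        Finset.single_le_sum (fun i _ => sub_nonneg.mpr (hle i t htT)) (Finset.mem_univ i₀)
      calc c i₀ / 2 * |t - t₀| ^ γ / u ≤ (∑ i, (h i t₀ - h i t)) / u := by
            gcongr
            linarith
        _ ≤ g u t - g u t₀ := hkey
  · rintro t ⟨htT, htθ⟩
    have htK : t ∈ K := ⟨htT, fun hmem => htθ ⟨hmem.1.le, hmem.2.le⟩⟩
    calc C₂ / u ≤ F t / u := by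
          gcongr
          exact hC₂ t htK
      _ ≤ g u t - g u t₀ := key u hu t htT
end
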